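/- arXiv:math/0605381 — 5 statements merged into one kernel-verified Lean document; each statement's English description precedes it below -/
import Mathlib

section
/- Let R be a commutative ring with unit, V an R-module, r ≥ 1, and let T₁, …, T_r be R-linear automorphisms of V; set T_{r+1} := (T₁⋯T_r)^{−1}. Let F be the free group on generators g₁, …, g_r and let ρ : F → GL(V) be the homomorphism with ρ(g_i) = T_i, where GL(V) acts on V on the right and a 1-cocycle is a map δ : F → V with δ(αβ) = δ(α)ρ(β) + δ(β). Define H_T := { (v₁,…,v_{r+1}) ∈ V^{r+1} : v₁(T₂⋯T_{r+1}) + v₂(T₃⋯T_{r+1}) + ⋯ + v_r T_{r+1} + v_{r+1} = 0 } and E_T := { (v(T₁−1), …, v(T_{r+1}−1)) : v ∈ V }. Then E_T ⊆ H_T, and the map sending a 1-cocycle δ to the tuple (δ(g₁), …, δ(g_r), δ((g₁⋯g_r)^{−1})) induces an R-module isomorphism from the first group cohomology H¹(F, V) (1-cocycles modulo 1-coboundaries) onto H_T/E_T. -/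
/-!
A 1-cocycle on a group `G` with values in a right `G`-module `V` is the same thing as a
section `g ↦ (δ g, g)` of the projection `V ⋊ G → G`. On a free group such sections exist and
are unique for any prescribed values on the generators, so a cocycle on `F = ⟨g₁, …, g_r⟩` is an
arbitrary tuple `(δ g₁, …, δ g_r)`. The value on `g_{r+1} = (g₁⋯g_r)⁻¹` is then forced by the
cocycle identity applied to `g₁⋯g_r g_{r+1} = 1`, which unfolds to the linear relation cutting
out `H_T`. Coboundaries are exactly the cocycles that agree with some `γ ↦ u ρ(γ) - u` on the
generators, i.e. those evaluating into `E_T`.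
-/

/-- The tuple `(g₁, …, g_r, (g₁⋯g_r)⁻¹)` of elements of the free group on `r` generators:
for `i < r` this is the `i`-th generator, and the last entry is the inverse of the product
of all generators. -/
noncomputable def convGens (r : ℕ) : Fin (r + 1) → FreeGroup (Fin r) :=
  fun i => if h : (i : ℕ) < r then FreeGroup.of ⟨i, h⟩
    else ((List.ofFn fun j : Fin r => FreeGroup.of j).prod)⁻¹

/-- The partial product `g₁⋯g_i` (for `i = r + 1` this is the full product times the
inverse of the full product, i.e. `1`). -/
noncomputable def convPre (r : ℕ) (i : Fin (r + 1)) : FreeGroup (Fin r) :=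
  ((List.ofFn (convGens r)).take ((i : ℕ) + 1)).prod

open FreeGroup

variable {R : Type*} [Semiring R] {V : Type*} [AddCommGroup V] [Module R V] {G : Type*} [Group G]

structure IsRightAction (ρ : G → V →ₗ[R] V) : Prop where
  map_one : ρ 1 = LinearMap.id
  map_mul : ∀ a b, ρ (a * b) = (ρ b).comp (ρ a)

def IsCocycle (ρ : G → V →ₗ[R] V) (δ : G → V) : Prop :=
  ∀ a b, δ (a * b) = ρ b (δ a) + δ b

namespace IsRightAction

variable {ρ : G → V →ₗ[R] V} (hρ : IsRightAction ρ)
include hρ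

lemma apply_one (x : V) : ρ 1 x = x := by
  rw [hρ.map_one, LinearMap.id_apply]

lemma inv_apply_apply (a : G) (x : V) : ρ a⁻¹ (ρ a x) = x := by
  rw [← LinearMap.comp_apply, ← hρ.map_mul, mul_inv_cancel, hρ.apply_one]

lemma apply_inv_apply (a : G) (x : V) : ρ a (ρ a⁻¹ x) = x := by
  simpa using hρ.inv_apply_apply a⁻¹ x

lemma isCocycle_coboundary (u : V) : IsCocycle ρ fun g => ρ g u - u := by
  intro a b
  change ρ (a * b) u - u = ρ b (ρ a u - u) + (ρ b u - u)
  rw [hρ.map_mul, LinearMap.comp_apply, map_sub]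
  abel

abbrev semidirectGroup : Group (V × G) where
  mul p q := (ρ q.2 p.1 + q.1, p.2 * q.2)
  one := (0, 1)
  inv p := (-ρ p.2⁻¹ p.1, p.2⁻¹)
  mul_assoc := by
    rintro ⟨x, a⟩ ⟨y, b⟩ ⟨z, c⟩
    change (ρ c (ρ b x + y) + z, a * b * c) = (ρ (b * c) x + (ρ c y + z), a * (b * c))
    rw [hρ.map_mul, LinearMap.comp_apply, map_add, add_assoc, mul_assoc]
  one_mul := by
    rintro ⟨x, a⟩
    change (ρ a 0 + x, 1 * a) = (x, a)
    rw [map_zero, zero_add, one_mul]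
  mul_one := by
    rintro ⟨x, a⟩
    change (ρ 1 x + 0, a * 1) = (x, a)
    rw [hρ.apply_one, add_zero, mul_one]
  inv_mul_cancel := by
    rintro ⟨x, a⟩
    change (ρ a (-ρ a⁻¹ x) + x, a⁻¹ * a) = (0, 1)
    rw [map_neg, hρ.apply_inv_apply, neg_add_cancel, inv_mul_cancel]

end IsRightAction

lemma IsRightAction.exists_isCocycle_of {α : Type*} {ρ : FreeGroup α → V →ₗ[R] V}
    (hρ : IsRightAction ρ) (w : α → V) :
    ∃ δ : FreeGroup α → V, IsCocycle ρ δ ∧ ∀ j, δ (of j) = w j := by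
  let := hρ.semidirectGroup
  let s : FreeGroup α →* V × FreeGroup α := FreeGroup.lift fun j => (w j, of j)
  let π : V × FreeGroup α →* FreeGroup α :=
    { toFun := Prod.snd, map_one' := rfl, map_mul' := fun _ _ => rfl }
  have hs : ∀ γ, (s γ).2 = γ :=
    DFunLike.congr_fun (FreeGroup.ext_hom (f := π.comp s) (g := MonoidHom.id _) fun j => by
      simp only [MonoidHom.comp_apply, s, lift_apply_of]; rfl)
  refine ⟨fun γ => (s γ).1, fun a b => ?_, fun j => by simp [s]⟩
  change (s (a * b)).1 = ρ b (s a).1 + (s b).1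
  rw [_root_.map_mul]
  change ρ (s b).2 (s a).1 + (s b).1 = _
  rw [hs b]

namespace IsCocycle

variable {ρ : G → V →ₗ[R] V} {δ : G → V}

lemma map_one (hρ : IsRightAction ρ) (hδ : IsCocycle ρ δ) : δ 1 = 0 := by
  simpa [hρ.apply_one] using hδ 1 1

lemma map_inv (hρ : IsRightAction ρ) (hδ : IsCocycle ρ δ) (a : G) : δ a⁻¹ = -ρ a⁻¹ (δ a) := by
  have h := hδ a a⁻¹
  rw [mul_inv_cancel, hδ.map_one hρ] at h
  exact eq_neg_of_add_eq_zero_right h.symm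

lemma inv_apply_mul (hρ : IsRightAction ρ) (hδ : IsCocycle ρ δ) (a b : G) :
    ρ (a * b)⁻¹ (δ (a * b)) = ρ a⁻¹ (δ a) + ρ a⁻¹ (ρ b⁻¹ (δ b)) := by
  rw [hδ, mul_inv_rev, hρ.map_mul, LinearMap.comp_apply, map_add, map_add,
    hρ.inv_apply_apply]

lemma sum_ofFn (hρ : IsRightAction ρ) (hδ : IsCocycle ρ δ) {n : ℕ} (f : Fin n → G) :
    ∑ i : Fin n, ρ ((List.ofFn f).take (i + 1)).prod⁻¹ (δ (f i)) =
      ρ (List.ofFn f).prod⁻¹ (δ (List.ofFn f).prod) := by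
  induction n with
  | zero => simp [hδ.map_one hρ]
  | succ n ih =>
    rw [Fin.sum_univ_succ, List.ofFn_succ, List.prod_cons, hδ.inv_apply_mul hρ,
      ← ih fun i => f i.succ, map_sum]
    congr 1
    · simp
    · refine Finset.sum_congr rfl fun i _ => ?_
      rw [Fin.val_succ, List.take_succ_cons, List.prod_cons, mul_inv_rev, hρ.map_mul]
      rfl

lemma ext_of {α : Type*} {ρ : FreeGroup α → V →ₗ[R] V} {δ δ' : FreeGroup α → V}
    (hρ : IsRightAction ρ) (hδ : IsCocycle ρ δ) (hδ' : IsCocycle ρ δ')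
    (h : ∀ j, δ (of j) = δ' (of j)) : δ = δ' := by
  funext γ
  induction γ using FreeGroup.induction_on with
  | C1 => rw [hδ.map_one hρ, hδ'.map_one hρ]
  | of j => exact h j
  | inv_of j hj => rw [hδ.map_inv hρ, hδ'.map_inv hρ, hj]
  | mul a b ha hb => rw [hδ, hδ', ha, hb]

end IsCocycle

section Evaluation

variable {r : ℕ}

lemma convGens_castSucc (j : Fin r) : convGens r j.castSucc = of j := by
  simp [convGens]

lemma prod_ofFn_convGens : (List.ofFn (convGens r)).prod = 1 := by
  rw [List.ofFn_succ', List.prod_concat]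
  simp [convGens]

lemma convPre_last : convPre r (Fin.last r) = 1 := by
  rw [convPre, List.take_of_length_le (by simp), prod_ofFn_convGens]

variable {ρ : FreeGroup (Fin r) → V →ₗ[R] V} {δ : FreeGroup (Fin r) → V}

lemma IsCocycle.sum_convPre_convGens (hρ : IsRightAction ρ) (hδ : IsCocycle ρ δ) :
    ∑ i, ρ (convPre r i)⁻¹ (δ (convGens r i)) = 0 := by
  have h := hδ.sum_ofFn hρ (convGens r)
  rwa [prod_ofFn_convGens, inv_one, hδ.map_one hρ, map_zero] at h

lemma IsCocycle.exists_convGens_eq_coboundary_iff (hρ : IsRightAction ρ) (hδ : IsCocycle ρ δ) :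
    (∃ u, ∀ i, δ (convGens r i) = ρ (convGens r i) u - u) ↔ ∃ v, ∀ γ, δ γ = v - ρ γ v := by
  constructor
  · rintro ⟨u, hu⟩
    refine ⟨-u, fun γ => ?_⟩
    have hδu := hδ.ext_of hρ (hρ.isCocycle_coboundary u) fun j => by
      simpa [convGens_castSucc] using hu j.castSucc
    rw [hδu, map_neg, sub_neg_eq_add, neg_add_eq_sub]
  · rintro ⟨v, hv⟩
    exact ⟨-v, fun i => by rw [hv, map_neg, sub_neg_eq_add, neg_add_eq_sub]⟩

lemma exists_isCocycle_convGens (hρ : IsRightAction ρ) (v : Fin (r + 1) → V)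
    (hv : ∑ i, ρ (convPre r i)⁻¹ (v i) = 0) :
    ∃ δ, IsCocycle ρ δ ∧ ∀ i, δ (convGens r i) = v i := by
  obtain ⟨δ, hδ, hδv⟩ := hρ.exists_isCocycle_of fun (j : Fin r) => v j.castSucc
  have hcast (j : Fin r) : δ (convGens r j.castSucc) = v j.castSucc := by
    rw [convGens_castSucc, hδv]
  -- both tuples satisfy the relation of `H_T`, in which the last entry has coefficient `ρ 1`
  have hlast : δ (convGens r (Fin.last r)) = v (Fin.last r) := by
    have h := hδ.sum_convPre_convGens hρ
    rw [← hv, Fin.sum_univ_castSucc, Fin.sum_univ_castSucc] at h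
    simp only [hcast, convPre_last, inv_one, hρ.apply_one, add_right_inj] at h
    exact h
  exact ⟨δ, hδ, Fin.lastCases hlast hcast⟩

end Evaluation

theorem cocycle_evaluation_iso_general
    (R : Type) [CommRing R] (V : Type) [AddCommGroup V] [Module R V]
    (r : ℕ)
    (ρ : FreeGroup (Fin r) → (V →ₗ[R] V))
    (hρmul : ∀ a b, ρ (a * b) = (ρ b).comp (ρ a))
    (hρone : ρ 1 = LinearMap.id) :
    -- E_T ⊆ H_T
    (∀ u : V, ∑ i : Fin (r + 1),
        ρ (convPre r i)⁻¹ (ρ (convGens r i) u - u) = 0) ∧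
    -- evaluation of a 1-cocycle lies in H_T
    (∀ δ : FreeGroup (Fin r) → V, (∀ a b, δ (a * b) = ρ b (δ a) + δ b) →
      ∑ i : Fin (r + 1), ρ (convPre r i)⁻¹ (δ (convGens r i)) = 0) ∧
    -- a 1-cocycle evaluates into E_T iff it is a 1-coboundary
    (∀ δ : FreeGroup (Fin r) → V, (∀ a b, δ (a * b) = ρ b (δ a) + δ b) →
      ((∃ u : V, ∀ i : Fin (r + 1), δ (convGens r i) = ρ (convGens r i) u - u) ↔
        ∃ v : V, ∀ γ, δ γ = v - ρ γ v)) ∧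
    -- every element of H_T is the evaluation of some 1-cocycle
    (∀ v : Fin (r + 1) → V,
      (∑ i : Fin (r + 1), ρ (convPre r i)⁻¹ (v i) = 0) →
      ∃ δ : FreeGroup (Fin r) → V, (∀ a b, δ (a * b) = ρ b (δ a) + δ b) ∧
        ∀ i : Fin (r + 1), δ (convGens r i) = v i) := by
  have hρ : IsRightAction ρ := ⟨hρone, hρmul⟩
  exact ⟨fun u => (hρ.isCocycle_coboundary u).sum_convPre_convGens hρ,
    fun _ hδ => IsCocycle.sum_convPre_convGens hρ hδ,
    fun _ hδ => IsCocycle.exists_convGens_eq_coboundary_iff hρ hδ,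
    fun v hv => exists_isCocycle_convGens hρ v hv⟩

/-- Right action via an anti-homomorphism `ρ` of the free group `F` on
`r` generators into `End_R(V)` sending the generators to automorphisms `T₁, …, T_r`
(so that `ρ((g₁⋯g_r)⁻¹)` realizes `T_{r+1} := (T₁⋯T_r)⁻¹`).  With
`H_T = {(v₁,…,v_{r+1}) : Σᵢ vᵢ(T_{i+1}⋯T_{r+1}) = 0}` (here `vᵢ(T_{i+1}⋯T_{r+1}) =
ρ((g₁⋯g_i)⁻¹) vᵢ`) and `E_T = {(v(T₁−1),…,v(T_{r+1}−1)) : v ∈ V}`, the evaluation map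
`δ ↦ (δ(g₁),…,δ(g_r),δ((g₁⋯g_r)⁻¹))` sends 1-cocycles into `H_T`, contains `E_T ⊆ H_T`,
hits `E_T` exactly on 1-coboundaries, and is onto `H_T`; hence it induces an `R`-module
isomorphism `H¹(F,V) ≅ H_T/E_T`. -/
theorem cocycle_evaluation_iso
    (R : Type) [CommRing R] (V : Type) [AddCommGroup V] [Module R V]
    (r : ℕ) (hr : 1 ≤ r)
    (T : Fin r → (V ≃ₗ[R] V))
    (ρ : FreeGroup (Fin r) → (V →ₗ[R] V))
    (hρmul : ∀ a b, ρ (a * b) = (ρ b).comp (ρ a))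
    (hρone : ρ 1 = LinearMap.id)
    (hρgen : ∀ i : Fin r, ρ (FreeGroup.of i) = (T i : V →ₗ[R] V)) :
    -- E_T ⊆ H_T
    (∀ u : V, ∑ i : Fin (r + 1),
        ρ (convPre r i)⁻¹ (ρ (convGens r i) u - u) = 0) ∧
    -- evaluation of a 1-cocycle lies in H_T
    (∀ δ : FreeGroup (Fin r) → V, (∀ a b, δ (a * b) = ρ b (δ a) + δ b) →
      ∑ i : Fin (r + 1), ρ (convPre r i)⁻¹ (δ (convGens r i)) = 0) ∧
    -- a 1-cocycle evaluates into E_T iff it is a 1-coboundary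
    (∀ δ : FreeGroup (Fin r) → V, (∀ a b, δ (a * b) = ρ b (δ a) + δ b) →
      ((∃ u : V, ∀ i : Fin (r + 1), δ (convGens r i) = ρ (convGens r i) u - u) ↔
        ∃ v : V, ∀ γ, δ γ = v - ρ γ v)) ∧
    -- every element of H_T is the evaluation of some 1-cocycle
    (∀ v : Fin (r + 1) → V,
      (∑ i : Fin (r + 1), ρ (convPre r i)⁻¹ (v i) = 0) →
      ∃ δ : FreeGroup (Fin r) → V, (∀ a b, δ (a * b) = ρ b (δ a) + δ b) ∧
        ∀ i : Fin (r + 1), δ (convGens r i) = v i) :=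
  cocycle_evaluation_iso_general R V r ρ hρmul hρone
end

section
/- Let K be a field, V a finite-dimensional K-vector space, p ≥ 1, A₁, …, A_p ∈ GL(V) (acting on the right), and λ ∈ K with λ ≠ 0. Let F be the free group on generators α₁, …, α_{p+1} and ρ : F → GL(V) the homomorphism with ρ(α_m) = A_m for 1 ≤ m ≤ p and ρ(α_{p+1}) = λ·id_V. Fix i with 1 ≤ i ≤ p and let σ : F → F be the group endomorphism determined by σ(α_m) = α_m for m < i, σ(α_i) = α_{p+1}^{−1}α_i α_{p+1}, σ(α_m) = [α_i,α_{p+1}]^{−1} α_m [α_i,α_{p+1}] for i < m ≤ p, and σ(α_{p+1}) = (α_i α_{p+1})^{−1} α_{p+1} (α_i α_{p+1}). Then for every 1-cocycle δ : F → V of ρ and every m with 1 ≤ m ≤ p: if m < i then δ(σ([α_m, α_{p+1}])) = δ([α_i,α_{p+1}])·λ(A_m − 1) + δ([α_m,α_{p+1}]); if m = i then δ(σ([α_i, α_{p+1}])) = δ([α_i,α_{p+1}])·λ A_i; and if m > i then δ(σ([α_m, α_{p+1}])) = δ([α_i,α_{p+1}])·(A_m − 1) + δ([α_m,α_{p+1}]).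 -/
/-- The commutator `[a, b] := a⁻¹ b⁻¹ a b`. -/
def commE {G : Type*} [Group G] (a b : G) : G := a⁻¹ * b⁻¹ * a * b

/-!
Write `b = αᵢ`, `t = α_{p+1}` and `c = [b, t]`. Since `ρ t` is a scalar, every commutator `[x, t]`
lies in the kernel of `ρ`, and on that kernel a cocycle is additive with `δ (g⁻¹ k g) = δ k · ρ g`.
As `σ t = c⁻¹ t` and `σ b = b c`, in each of the three cases an identity in the free group writes
`σ [αₘ, t]` as a product of `[αₘ, t]` and conjugates of `c^{±1}`, whence the formulas.
-/

section GroupIdentities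

variable {G : Type*} [Group G]

theorem map_commE {H : Type*} [Group H] (f : G →* H) (a b : G) :
    f (commE a b) = commE (f a) (f b) := by
  simp only [commE, map_mul, map_inv]

theorem conj_mul_eq_commE_inv_mul (b t : G) : (b * t)⁻¹ * t * (b * t) = (commE b t)⁻¹ * t := by
  simp only [commE]; group

theorem conj_eq_mul_commE (b t : G) : t⁻¹ * b * t = b * commE b t := by
  simp only [commE]; group

theorem commE_inv_mul_right (a c t : G) :
    commE a (c⁻¹ * t) = commE a t * (t⁻¹ * (a⁻¹ * c * a * c⁻¹) * t) := by
  simp only [commE]; group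

theorem commE_mul_commE_commE_inv_mul (b t : G) :
    commE (b * commE b t) ((commE b t)⁻¹ * t) = (b * t)⁻¹ * commE b t * (b * t) := by
  simp only [commE]; group

theorem commE_conj_commE_inv_mul (a c t : G) :
    commE (c⁻¹ * a * c) (c⁻¹ * t) = c⁻¹ * (a⁻¹ * c * a) * commE a t := by
  simp only [commE]; group

theorem MonoidHom.commE_mem_ker {M : Type*} [Monoid M] (f : G →* M) {x t : G}
    (h : Commute (f x) (f t)) : commE x t ∈ f.ker := by
  rw [MonoidHom.mem_ker]
  calc f (commE x t) = f x⁻¹ * (f t⁻¹ * (f x * f t)) := by simp only [commE, map_mul, mul_assoc]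
    _ = f x⁻¹ * (f (t⁻¹ * t) * f x) := by rw [h.eq, map_mul, mul_assoc]
    _ = 1 := by rw [inv_mul_cancel, map_one, one_mul, ← map_mul, inv_mul_cancel, map_one]

end GroupIdentities

@[simps]
def MonoidHom.ofAntiHom {G M : Type*} [MulOneClass G] [Monoid M] (ρ : G → M) (hone : ρ 1 = 1)
    (hmul : ∀ a b, ρ (a * b) = ρ b * ρ a) : G →* Mᵐᵒᵖ where
  toFun g := MulOpposite.op (ρ g)
  map_one' := congrArg MulOpposite.op hone
  map_mul' a b := congrArg MulOpposite.op (hmul a b)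

namespace RightCocycle

variable {G R V : Type*} [Group G] [Semiring R] [AddCommGroup V] [Module R V]
  {ρ : G →* (Module.End R V)ᵐᵒᵖ} {δ : G → V} (hδ : ∀ a b, δ (a * b) = (ρ b).unop (δ a) + δ b)
include hδ

theorem map_one : δ 1 = 0 := by
  have h := hδ 1 1
  rwa [one_mul, _root_.map_one, MulOpposite.unop_one, Module.End.one_apply, left_eq_add] at h

theorem map_mul_of_mem_ker (k : G) {l : G} (hl : l ∈ ρ.ker) : δ (k * l) = δ k + δ l := by
  rw [hδ, ρ.mem_ker.mp hl, MulOpposite.unop_one, Module.End.one_apply]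

theorem map_inv_of_mem_ker {k : G} (hk : k ∈ ρ.ker) : δ k⁻¹ = -δ k := by
  rw [eq_neg_iff_add_eq_zero, ← map_mul_of_mem_ker hδ _ hk, inv_mul_cancel, map_one hδ]

theorem map_conj_of_mem_ker {k : G} (hk : k ∈ ρ.ker) (g : G) :
    δ (g⁻¹ * k * g) = (ρ g).unop (δ k) := by
  have hg : (ρ g).unop (δ g⁻¹) + δ g = 0 := by rw [← hδ, inv_mul_cancel, map_one hδ]
  rw [hδ, map_mul_of_mem_ker hδ _ hk, map_add, add_right_comm, hg, zero_add]

theorem map_commE_inv_mul_right {a c t : G} (hc : c ∈ ρ.ker) :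
    δ (commE a (c⁻¹ * t)) = (ρ t).unop ((ρ a).unop (δ c) - δ c) + δ (commE a t) := by
  have hk : a⁻¹ * c * a * c⁻¹ ∈ ρ.ker := mul_mem (ρ.normal_ker.conj_mem' c hc a) (inv_mem hc)
  rw [commE_inv_mul_right, map_mul_of_mem_ker hδ _ (ρ.normal_ker.conj_mem' _ hk t),
    map_conj_of_mem_ker hδ hk, map_mul_of_mem_ker hδ _ (inv_mem hc), map_inv_of_mem_ker hδ hc,
    map_conj_of_mem_ker hδ hc, ← sub_eq_add_neg, add_comm]

theorem map_commE_mul_commE_commE_inv_mul {b t : G} (hbt : commE b t ∈ ρ.ker) :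
    δ (commE (b * commE b t) ((commE b t)⁻¹ * t)) = (ρ t).unop ((ρ b).unop (δ (commE b t))) := by
  rw [commE_mul_commE_commE_inv_mul, map_conj_of_mem_ker hδ hbt, _root_.map_mul,
    MulOpposite.unop_mul, Module.End.mul_apply]

theorem map_commE_conj_commE_inv_mul {a c t : G} (hc : c ∈ ρ.ker) (hat : commE a t ∈ ρ.ker) :
    δ (commE (c⁻¹ * a * c) (c⁻¹ * t)) = (ρ a).unop (δ c) - δ c + δ (commE a t) := by
  rw [commE_conj_commE_inv_mul, map_mul_of_mem_ker hδ _ hat,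
    map_mul_of_mem_ker hδ _ (ρ.normal_ker.conj_mem' c hc a), map_inv_of_mem_ker hδ hc,
    map_conj_of_mem_ker hδ hc, neg_add_eq_sub]

end RightCocycle

theorem cocycle_braid_formulas_general
    (K : Type) [Field K] (V : Type) [AddCommGroup V] [Module K V]
    (p : ℕ)
    (A : Fin p → (V ≃ₗ[K] V)) (lam : K)
    (ρ : FreeGroup (Fin (p + 1)) → (V →ₗ[K] V))
    (hρmul : ∀ a b, ρ (a * b) = (ρ b).comp (ρ a))
    (hρone : ρ 1 = LinearMap.id)
    (hρA : ∀ m : Fin p, ρ (FreeGroup.of m.castSucc) = (A m : V →ₗ[K] V))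
    (hρlast : ρ (FreeGroup.of (Fin.last p)) = lam • (LinearMap.id : V →ₗ[K] V))
    (i : Fin p)
    (σ : FreeGroup (Fin (p + 1)) →* FreeGroup (Fin (p + 1)))
    (hσlt : ∀ m : Fin p, m < i →
      σ (FreeGroup.of m.castSucc) = FreeGroup.of m.castSucc)
    (hσeq : σ (FreeGroup.of i.castSucc) =
      (FreeGroup.of (Fin.last p))⁻¹ * FreeGroup.of i.castSucc * FreeGroup.of (Fin.last p))
    (hσgt : ∀ m : Fin p, i < m →
      σ (FreeGroup.of m.castSucc) =
        (commE (FreeGroup.of i.castSucc) (FreeGroup.of (Fin.last p)))⁻¹ *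
          FreeGroup.of m.castSucc *
          commE (FreeGroup.of i.castSucc) (FreeGroup.of (Fin.last p)))
    (hσlast : σ (FreeGroup.of (Fin.last p)) =
      (FreeGroup.of i.castSucc * FreeGroup.of (Fin.last p))⁻¹ *
        FreeGroup.of (Fin.last p) *
        (FreeGroup.of i.castSucc * FreeGroup.of (Fin.last p)))
    (δ : FreeGroup (Fin (p + 1)) → V)
    (hδ : ∀ a b, δ (a * b) = ρ b (δ a) + δ b) :
    ∀ m : Fin p,
      (m < i →
        δ (σ (commE (FreeGroup.of m.castSucc) (FreeGroup.of (Fin.last p)))) =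
          lam • ((A m) (δ (commE (FreeGroup.of i.castSucc) (FreeGroup.of (Fin.last p)))) -
              δ (commE (FreeGroup.of i.castSucc) (FreeGroup.of (Fin.last p)))) +
            δ (commE (FreeGroup.of m.castSucc) (FreeGroup.of (Fin.last p)))) ∧
      (m = i →
        δ (σ (commE (FreeGroup.of i.castSucc) (FreeGroup.of (Fin.last p)))) =
          lam • (A i) (δ (commE (FreeGroup.of i.castSucc) (FreeGroup.of (Fin.last p))))) ∧
      (i < m →
        δ (σ (commE (FreeGroup.of m.castSucc) (FreeGroup.of (Fin.last p)))) =
          ((A m) (δ (commE (FreeGroup.of i.castSucc) (FreeGroup.of (Fin.last p)))) -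
              δ (commE (FreeGroup.of i.castSucc) (FreeGroup.of (Fin.last p)))) +
            δ (commE (FreeGroup.of m.castSucc) (FreeGroup.of (Fin.last p)))) := by
  intro m
  set t := FreeGroup.of (Fin.last p)
  let ρop := MonoidHom.ofAntiHom (M := Module.End K V) ρ hρone hρmul
  have hker (x : FreeGroup (Fin (p + 1))) : commE x t ∈ ρop.ker :=
    ρop.commE_mem_ker <| Commute.op <| by rw [hρlast]; exact (Commute.one_right _).smul_right lam
  have hσt : σ t = (commE (FreeGroup.of i.castSucc) t)⁻¹ * t := by
    rw [hσlast, conj_mul_eq_commE_inv_mul]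
  have hρt (v : V) : ρ t v = lam • v := by rw [hρlast]; rfl
  refine ⟨fun hmi => ?_, ?_, fun hmi => ?_⟩
  · rw [map_commE, hσlt m hmi, hσt, RightCocycle.map_commE_inv_mul_right hδ (hker _)]
    simp [ρop, hρt, hρA]
  · rintro rfl
    rw [map_commE, hσeq, hσt, conj_eq_mul_commE,
      RightCocycle.map_commE_mul_commE_commE_inv_mul hδ (hker _)]
    simp [ρop, hρt, hρA]
  · rw [map_commE, hσgt m hmi, hσt, RightCocycle.map_commE_conj_commE_inv_mul hδ (hker _) (hker _)]
    simp [ρop, hρA]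

/-- Explicit braid action on evaluations of 1-cocycles: with the right
action `ρ` of the free group on `α₁,…,α_{p+1}` (generators indexed by `Fin (p+1)`,
`α_m = FreeGroup.of m.castSucc` for `m : Fin p` and `α_{p+1} = FreeGroup.of (Fin.last p)`)
sending `α_m ↦ A_m` and `α_{p+1} ↦ λ·id`, and `σ` the endomorphism described in the
statement, every 1-cocycle `δ` satisfies the three displayed formulas. -/
theorem cocycle_braid_formulas
    (K : Type) [Field K] (V : Type) [AddCommGroup V] [Module K V] [FiniteDimensional K V]
    (p : ℕ) (hp : 1 ≤ p)
    (A : Fin p → (V ≃ₗ[K] V)) (lam : K) (hlam : lam ≠ 0)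
    (ρ : FreeGroup (Fin (p + 1)) → (V →ₗ[K] V))
    (hρmul : ∀ a b, ρ (a * b) = (ρ b).comp (ρ a))
    (hρone : ρ 1 = LinearMap.id)
    (hρA : ∀ m : Fin p, ρ (FreeGroup.of m.castSucc) = (A m : V →ₗ[K] V))
    (hρlast : ρ (FreeGroup.of (Fin.last p)) = lam • (LinearMap.id : V →ₗ[K] V))
    (i : Fin p)
    (σ : FreeGroup (Fin (p + 1)) →* FreeGroup (Fin (p + 1)))
    (hσlt : ∀ m : Fin p, m < i →
      σ (FreeGroup.of m.castSucc) = FreeGroup.of m.castSucc)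
    (hσeq : σ (FreeGroup.of i.castSucc) =
      (FreeGroup.of (Fin.last p))⁻¹ * FreeGroup.of i.castSucc * FreeGroup.of (Fin.last p))
    (hσgt : ∀ m : Fin p, i < m →
      σ (FreeGroup.of m.castSucc) =
        (commE (FreeGroup.of i.castSucc) (FreeGroup.of (Fin.last p)))⁻¹ *
          FreeGroup.of m.castSucc *
          commE (FreeGroup.of i.castSucc) (FreeGroup.of (Fin.last p)))
    (hσlast : σ (FreeGroup.of (Fin.last p)) =
      (FreeGroup.of i.castSucc * FreeGroup.of (Fin.last p))⁻¹ *
        FreeGroup.of (Fin.last p) *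
        (FreeGroup.of i.castSucc * FreeGroup.of (Fin.last p)))
    (δ : FreeGroup (Fin (p + 1)) → V)
    (hδ : ∀ a b, δ (a * b) = ρ b (δ a) + δ b) :
    ∀ m : Fin p,
      (m < i →
        δ (σ (commE (FreeGroup.of m.castSucc) (FreeGroup.of (Fin.last p)))) =
          lam • ((A m) (δ (commE (FreeGroup.of i.castSucc) (FreeGroup.of (Fin.last p)))) -
              δ (commE (FreeGroup.of i.castSucc) (FreeGroup.of (Fin.last p)))) +
            δ (commE (FreeGroup.of m.castSucc) (FreeGroup.of (Fin.last p)))) ∧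
      (m = i →
        δ (σ (commE (FreeGroup.of i.castSucc) (FreeGroup.of (Fin.last p)))) =
          lam • (A i) (δ (commE (FreeGroup.of i.castSucc) (FreeGroup.of (Fin.last p))))) ∧
      (i < m →
        δ (σ (commE (FreeGroup.of m.castSucc) (FreeGroup.of (Fin.last p)))) =
          ((A m) (δ (commE (FreeGroup.of i.castSucc) (FreeGroup.of (Fin.last p)))) -
              δ (commE (FreeGroup.of i.castSucc) (FreeGroup.of (Fin.last p)))) +
            δ (commE (FreeGroup.of m.castSucc) (FreeGroup.of (Fin.last p)))) :=
  cocycle_braid_formulas_general K V p A lam ρ hρmul hρone hρA hρlast i σ hσlt hσeq hσgt hσlast δ hδ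
end

section
/- Let q be a prime power, n ≥ 1, and let T₁, …, T_r ∈ GL_n(F_q) be matrices generating an absolutely irreducible subgroup G of GL_n(F_q) such that the product T₁⋯T_r is a scalar matrix. Suppose F_q^n = V₁ ⊕ ⋯ ⊕ V_l is a direct sum decomposition into nonzero subspaces such that every element g ∈ G maps each V_j bijectively onto some V_k, and let φ : G → Sym(l) be the induced permutation homomorphism on the index set of the blocks. Then all subspaces V₁, …, V_l have the same dimension, and φ(T_i) = 1 for every i such that rank(T_i − 1) < dim V₁. -/
/-!
For a nonzero block `V j`, the span of its images `g • V j = V (φ g j)` is `G`-invariant, hence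
invariant under the algebra `G` generates, which is all of `M_n(F)`; so it is the whole space.
Since the blocks are independent and nonzero, every index lies in the orbit of `j`: `G` permutes
the blocks transitively, and they all have the same dimension `d`. If `φ(T) j ≠ j`, then `V j`
meets `T • V j` trivially, so `T - 1` is injective on `V j` and `rank(T - 1) ≥ d`.
-/

open Matrix Module Function

theorem iSupIndep.surjective_of_iSup_comp_eq_top {ι α L : Type*} [CompleteLattice L]
    {t : ι → L} (ht : iSupIndep t) (hne : ∀ i, t i ≠ ⊥) {f : α → ι}
    (htop : ⨆ a, t (f a) = ⊤) : Surjective f := by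
  intro k
  by_contra hk
  have hdisj := ht.disjoint_biSup (y := Set.range f) hk
  rw [iSup_range, htop, disjoint_top] at hdisj
  exact hne k hdisj

theorem LinearMap.finrank_le_finrank_range_sub_id {K M : Type*} [Field K] [AddCommGroup M]
    [Module K M] [FiniteDimensional K M] (f : M →ₗ[K] M) {U : Submodule K M}
    (hU : Disjoint U (U.map f)) : finrank K U ≤ finrank K (range (f - id)) := by
  have hinj : Injective ((f - id) ∘ₗ U.subtype) := by
    rw [← LinearMap.ker_eq_bot, eq_bot_iff]
    rintro ⟨x, hxU⟩ hx
    have hfix : f x = x := sub_eq_zero.mp hx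
    have hx0 : x = 0 := Submodule.disjoint_def.mp hU x hxU ⟨x, hxU, hfix⟩
    simp [hx0]
  calc finrank K U = finrank K (range ((f - id) ∘ₗ U.subtype)) :=
        (finrank_range_of_inj hinj).symm
    _ ≤ finrank K (range (f - id)) := Submodule.finrank_mono (range_comp_le_range _ _)

section VecMul

variable {K m : Type*} [Field K] [Fintype m]

theorem Matrix.vecMulLinear_mul (A B : Matrix m m K) :
    (A * B).vecMulLinear = B.vecMulLinear ∘ₗ A.vecMulLinear :=
  LinearMap.ext fun v => (vecMul_vecMul v A B).symm

variable [DecidableEq m]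

theorem Matrix.finrank_map_vecMulLinear {A : Matrix m m K} (hA : IsUnit A)
    (U : Submodule K (m → K)) : finrank K (U.map A.vecMulLinear) = finrank K U :=
  (Submodule.equivMapOfInjective _ (vecMul_injective_iff_isUnit.2 hA) U).finrank_eq.symm

theorem Matrix.finrank_le_rank_sub_one {A : Matrix m m K} {U : Submodule K (m → K)}
    (hU : Disjoint U (U.map A.vecMulLinear)) : finrank K U ≤ (A - 1).rank := by
  have hrank : (A - 1).rank = finrank K (LinearMap.range (A.vecMulLinear - LinearMap.id)) := by
    have hsub : (A - 1).vecMulLinear = A.vecMulLinear - LinearMap.id := by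
      ext
      simp
    rw [← rank_transpose, rank, mulVecLin_transpose, hsub]
  exact hrank ▸ A.vecMulLinear.finrank_le_finrank_range_sub_id hU

theorem Submodule.eq_top_of_forall_vecMul_mem {W : Submodule K (m → K)} (hW : W ≠ ⊥)
    (hinv : ∀ A : Matrix m m K, ∀ w ∈ W, w ᵥ* A ∈ W) : W = ⊤ := by
  obtain ⟨w, hwW, hw0⟩ := exists_mem_ne_zero_of_ne_bot hW
  obtain ⟨s, hs⟩ : ∃ s, w s ≠ 0 := by
    by_contra! h
    exact hw0 (funext h)
  refine eq_top_iff'.2 fun x => ?_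
  have hx : w ᵥ* (of fun t i => if t = s then (w s)⁻¹ * x i else 0) = x := by
    funext i
    simp [vecMul, dotProduct, hs]
  exact hx ▸ hinv _ w hwW

def Submodule.vecMulStabilizer (W : Submodule K (m → K)) : Subalgebra K (Matrix m m K) where
  carrier := {A | ∀ w ∈ W, w ᵥ* A ∈ W}
  mul_mem' hA hB w hw := by
    rw [← vecMul_vecMul]
    exact hB _ (hA w hw)
  one_mem' w hw := by rwa [vecMul_one]
  add_mem' hA hB w hw := by
    rw [vecMul_add]
    exact W.add_mem (hA w hw) (hB w hw)
  zero_mem' w _ := by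
    rw [vecMul_zero]
    exact W.zero_mem
  algebraMap_mem' c w hw := by
    rw [Algebra.algebraMap_eq_smul_one, vecMul_smul, vecMul_one]
    exact W.smul_mem c hw

theorem Submodule.eq_top_of_vecMul_mem_of_adjoin_eq_top {S : Set (Matrix m m K)}
    (hS : Algebra.adjoin K S = ⊤) {W : Submodule K (m → K)} (hW : W ≠ ⊥)
    (hinv : ∀ A ∈ S, ∀ w ∈ W, w ᵥ* A ∈ W) : W = ⊤ := by
  have hle : Algebra.adjoin K S ≤ W.vecMulStabilizer := Algebra.adjoin_le hinv
  rw [hS] at hle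
  exact eq_top_of_forall_vecMul_mem hW fun A => hle Algebra.mem_top

theorem iSup_map_vecMulLinear_eq_top {G : Subgroup (GL m K)}
    (hG : Algebra.adjoin K ((fun g : GL m K => (g : Matrix m m K)) '' (G : Set (GL m K))) = ⊤)
    {U : Submodule K (m → K)} (hU : U ≠ ⊥) :
    ⨆ g : G, U.map (vecMulLinear ((g : GL m K) : Matrix m m K)) = ⊤ := by
  set W := ⨆ g : G, U.map (vecMulLinear ((g : GL m K) : Matrix m m K))
  have hUW : U ≤ W := by
    refine (Eq.le ?_).trans (le_iSup _ (1 : G))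
    ext
    simp
  refine Submodule.eq_top_of_vecMul_mem_of_adjoin_eq_top hG (ne_bot_of_le_ne_bot hU hUW) ?_
  rintro _ ⟨h, hh, rfl⟩
  have hmap : W.map (vecMulLinear ((h : GL m K) : Matrix m m K)) ≤ W := by
    rw [Submodule.map_iSup]
    refine iSup_le fun g => ?_
    refine (Eq.le ?_).trans (le_iSup _ (g * ⟨h, hh⟩))
    rw [Subgroup.coe_mul, Units.val_mul, vecMulLinear_mul, Submodule.map_comp]
  exact fun w hw => hmap (Submodule.mem_map_of_mem hw)

end VecMul

theorem block_permutation_of_imprimitivity_general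
    (F : Type) [Field F]
    (n r l : ℕ) (hl : 0 < l)
    (T : Fin r → Matrix.GeneralLinearGroup (Fin n) F)
    (G : Subgroup (Matrix.GeneralLinearGroup (Fin n) F))
    (habs : Algebra.adjoin F
      ((fun g : Matrix.GeneralLinearGroup (Fin n) F =>
        (g : Matrix (Fin n) (Fin n) F)) '' (G : Set (Matrix.GeneralLinearGroup (Fin n) F))) = ⊤)
    (V : Fin l → Submodule F (Fin n → F))
    (hVne : ∀ j, V j ≠ ⊥)
    (hinternal : DirectSum.IsInternal V)
    (φ : ↥G → Equiv.Perm (Fin l))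
    (hφ : ∀ (g : ↥G) (j : Fin l),
      Submodule.map
        (Matrix.vecMulLinear ((g : Matrix.GeneralLinearGroup (Fin n) F) :
          Matrix (Fin n) (Fin n) F)) (V j) = V (φ g j)) :
    (∀ j k, Module.finrank F (V j) = Module.finrank F (V k)) ∧
    ∀ (i : Fin r) (g : ↥G), (g : Matrix.GeneralLinearGroup (Fin n) F) = T i →
      Matrix.rank ((T i : Matrix (Fin n) (Fin n) F) - 1) < Module.finrank F (V ⟨0, hl⟩) →
      φ g = 1 := by
  have hind := hinternal.submodule_iSupIndep
  have htrans : ∀ j, Surjective fun g : G => φ g j := fun j =>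
    hind.surjective_of_iSup_comp_eq_top hVne <| by
      simp_rw [← hφ]
      exact iSup_map_vecMulLinear_eq_top habs (hVne j)
  have hdim : ∀ j k, finrank F (V j) = finrank F (V k) := fun j k => by
    obtain ⟨g, rfl⟩ := htrans j k
    rw [← hφ]
    exact (finrank_map_vecMulLinear (g : GL (Fin n) F).isUnit (V j)).symm
  refine ⟨hdim, fun i g hg hrank => Equiv.ext fun j => ?_⟩
  by_contra hne
  have hdisj : Disjoint (V j) ((V j).map (T i : Matrix (Fin n) (Fin n) F).vecMulLinear) := by
    rw [← hg, hφ]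
    exact hind.pairwiseDisjoint (Ne.symm hne)
  have hle := finrank_le_rank_sub_one hdisj
  rw [hdim j ⟨0, hl⟩] at hle
  omega

/-- Let `T₁, …, T_r ∈ GL_n(F_q)` generate an absolutely irreducible
subgroup `G` (the `F_q`-subalgebra generated by `G` is all of `M_n(F_q)`) with scalar
product `T₁⋯T_r`.  If `F_q^n = V₁ ⊕ ⋯ ⊕ V_l` is a `G`-invariant decomposition into nonzero
subspaces with induced permutation map `φ : G → Sym(l)`, then all blocks `V_j` have the
same dimension and `φ(T_i) = 1` whenever `rank(T_i − 1) < dim V₁`. -/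
theorem block_permutation_of_imprimitivity
    (F : Type) [Field F] [Fintype F] (q : ℕ) (hcard : Fintype.card F = q)
    (n r l : ℕ) (hn : 1 ≤ n) (hl : 0 < l)
    (T : Fin r → Matrix.GeneralLinearGroup (Fin n) F)
    (hscalar : ∃ c : F,
      (List.ofFn fun i => ((T i : Matrix (Fin n) (Fin n) F))).prod =
        c • (1 : Matrix (Fin n) (Fin n) F))
    (G : Subgroup (Matrix.GeneralLinearGroup (Fin n) F))
    (hG : G = Subgroup.closure (Set.range T))
    (habs : Algebra.adjoin F
      ((fun g : Matrix.GeneralLinearGroup (Fin n) F =>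
        (g : Matrix (Fin n) (Fin n) F)) '' (G : Set (Matrix.GeneralLinearGroup (Fin n) F))) = ⊤)
    (V : Fin l → Submodule F (Fin n → F))
    (hVne : ∀ j, V j ≠ ⊥)
    (hinternal : DirectSum.IsInternal V)
    (φ : ↥G → Equiv.Perm (Fin l))
    (hφ : ∀ (g : ↥G) (j : Fin l),
      Submodule.map
        (Matrix.vecMulLinear ((g : Matrix.GeneralLinearGroup (Fin n) F) :
          Matrix (Fin n) (Fin n) F)) (V j) = V (φ g j)) :
    (∀ j k, Module.finrank F (V j) = Module.finrank F (V k)) ∧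
    ∀ (i : Fin r) (g : ↥G), (g : Matrix.GeneralLinearGroup (Fin n) F) = T i →
      Matrix.rank ((T i : Matrix (Fin n) (Fin n) F) - 1) < Module.finrank F (V ⟨0, hl⟩) →
      φ g = 1 :=
  block_permutation_of_imprimitivity_general F n r l hl T G habs V hVne hinternal φ hφ
end

section
/- Let ℓ be a prime with ℓ ≠ 2, and let Ā₁, Ā₂, Ā₃, Ā₄ ∈ GL₂(F_ℓ) be the reductions modulo ℓ of the integer matrices A₁ = [[-3,-8],[2,5]], A₂ = [[1,-4],[0,1]], A₃ = [[1,0],[2,1]], A₄ = [[-3,-4],[4,5]]. Then the representation of the group generated by Ā₁, Ā₂, Ā₃, Ā₄ on F_ℓ² is absolutely irreducible; equivalently, the F_ℓ-subalgebra of the 2×2 matrix algebra M₂(F_ℓ) generated by Ā₁, Ā₂, Ā₃, Ā₄ is all of M₂(F_ℓ). -/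
/-!
Since `ℓ` is odd, `2` and `4` are units mod `ℓ`, so the unipotent matrices
`Ā₂ = 1 - 4 E₀₁` and `Ā₃ = 1 + 2 E₁₀` already yield the matrix units `E₀₁` and `E₁₀`.
Their products give `E₀₀` and `E₁₁`, and the four matrix units span `M₂(F_ℓ)`.
-/

/-- The integer matrix `A₁`. -/
def A₁ : Matrix (Fin 2) (Fin 2) ℤ := !![-3, -8; 2, 5]
/-- The integer matrix `A₂`. -/
def A₂ : Matrix (Fin 2) (Fin 2) ℤ := !![1, -4; 0, 1]
/-- The integer matrix `A₃`. -/
def A₃ : Matrix (Fin 2) (Fin 2) ℤ := !![1, 0; 2, 1]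
/-- The integer matrix `A₄`. -/
def A₄ : Matrix (Fin 2) (Fin 2) ℤ := !![-3, -4; 4, 5]

open Matrix

theorem Subalgebra.mem_of_one_add_smul_mem {R A : Type*} [CommRing R] [Ring A] [Algebra R A]
    (S : Subalgebra R A) {c : R} (hc : IsUnit c) {x : A} (h : 1 + c • x ∈ S) : x ∈ S := by
  have hcx : c • x ∈ S := by simpa using S.sub_mem h S.one_mem
  exact (Submodule.smul_mem_iff_of_isUnit S.toSubmodule hc).mp hcx

theorem Matrix.single_mem_of_single_zero_one_mem_of_single_one_zero_mem {R : Type*} [CommRing R]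
    {S : Subalgebra R (Matrix (Fin 2) (Fin 2) R)} (h01 : single 0 1 1 ∈ S)
    (h10 : single 1 0 1 ∈ S) (i j : Fin 2) : single i j 1 ∈ S := by
  fin_cases i <;> fin_cases j
  · simpa using S.mul_mem h01 h10
  · exact h01
  · exact h10
  · simpa using S.mul_mem h10 h01

theorem Matrix.subalgebra_eq_top_of_single_zero_one_mem_of_single_one_zero_mem {R : Type*}
    [CommRing R] {S : Subalgebra R (Matrix (Fin 2) (Fin 2) R)} (h01 : single 0 1 1 ∈ S)
    (h10 : single 1 0 1 ∈ S) : S = ⊤ := by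
  refine eq_top_iff.mpr fun M _ => ?_
  rw [matrix_eq_sum_single M]
  refine S.sum_mem fun i _ => S.sum_mem fun j _ => ?_
  rw [← mul_one (M i j), ← smul_eq_mul, ← smul_single]
  exact S.smul_mem (single_mem_of_single_zero_one_mem_of_single_one_zero_mem h01 h10 i j) _

theorem A₂_map_intCast (R : Type*) [Ring R] :
    A₂.map (Int.cast : ℤ → R) = 1 + (-4 : R) • single 0 1 1 := by
  ext i j
  fin_cases i <;> fin_cases j <;> simp [A₂, one_apply]

theorem A₃_map_intCast (R : Type*) [Ring R] :
    A₃.map (Int.cast : ℤ → R) = 1 + (2 : R) • single 1 0 1 := by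
  ext i j
  fin_cases i <;> fin_cases j <;> simp [A₃, one_apply]

/-- For every prime `ℓ ≠ 2`, the reductions mod `ℓ` of the matrices
`A₁, A₂, A₃, A₄` act absolutely irreducibly on `F_ℓ²`; equivalently, the `F_ℓ`-subalgebra
of `M₂(F_ℓ)` they generate is the whole matrix algebra. -/
theorem reductions_absolutely_irreducible
    (ℓ : ℕ) [Fact (Nat.Prime ℓ)] (hodd : ℓ ≠ 2) :
    Algebra.adjoin (ZMod ℓ)
      ({A₁.map (Int.cast : ℤ → ZMod ℓ), A₂.map (Int.cast : ℤ → ZMod ℓ),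
        A₃.map (Int.cast : ℤ → ZMod ℓ), A₄.map (Int.cast : ℤ → ZMod ℓ)} :
        Set (Matrix (Fin 2) (Fin 2) (ZMod ℓ))) = ⊤ := by
  have h2 : IsUnit (2 : ZMod ℓ) :=
    (Ring.two_ne_zero (by rwa [ZMod.ringChar_zmod_n])).isUnit
  have h4 : IsUnit (-4 : ZMod ℓ) := by
    convert (h2.mul h2).neg using 1
    norm_num
  apply subalgebra_eq_top_of_single_zero_one_mem_of_single_one_zero_mem
  · refine Subalgebra.mem_of_one_add_smul_mem _ h4 ?_
    exact A₂_map_intCast (ZMod ℓ) ▸ Algebra.subset_adjoin (by simp)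
  · refine Subalgebra.mem_of_one_add_smul_mem _ h2 ?_
    exact A₃_map_intCast (ZMod ℓ) ▸ Algebra.subset_adjoin (by simp)
end

section
/- Let ℓ be an odd prime such that 2 is a quadratic non-residue modulo ℓ (equivalently ℓ ≡ 3 or 5 (mod 8)), and let M̄₁, M̄₂ ∈ GL₃(F_ℓ) be the reductions modulo ℓ of the integer matrices M₁ and M₂. Then (M̄₁·M̄₂)^{ℓ+1} is the identity matrix, while (M̄₁·M̄₂)^{(ℓ+1)/2} is not the identity matrix. -/
/-!
Over `ℤ`, `M₁ * M₂ = (1 + K)²` for an integer matrix `K` with `K³ = 2K`, so `1 + K` behaves like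
`1 + √2` and `M₁ M₂` like `(1 + √2)² = 3 + 2√2`. When `2` is not a square mod `ℓ`, Euler's
criterion gives `2 ^ (ℓ / 2) = -1`, so Frobenius acts as conjugation: `(1 + K)^ℓ = 1 + K^ℓ = 1 - K`.
Hence `(M₁ M₂)^((ℓ+1)/2) = (1 + K)^(ℓ+1) = 1 - K²`, the norm `(1 - √2)(1 + √2) = -1` on the
`√2`-block and `1` on the remaining line: an involution different from `1`.
-/

/-- The integer matrix `M₁`. -/
def M₁ : Matrix (Fin 3) (Fin 3) ℤ := !![-1, -4, 4; 0, 1, 0; 0, 0, 1]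
/-- The integer matrix `M₂`. -/
def M₂ : Matrix (Fin 3) (Fin 3) ℤ := !![1, 0, 0; -2, -1, 2; 0, 0, 1]

theorem ZMod.two_pow_div_two_eq_neg_one {p : ℕ} [Fact p.Prime] (h2 : ¬IsSquare (2 : ZMod p)) :
    (2 : ZMod p) ^ (p / 2) = -1 := by
  have h2_ne_zero : (2 : ZMod p) ≠ 0 := fun h => h2 (h ▸ IsSquare.zero)
  exact (ZMod.pow_div_two_eq_neg_one_or_one p h2_ne_zero).resolve_left
    (mt (ZMod.euler_criterion p h2_ne_zero).mpr h2)

section RootTwo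

variable {A : Type*} [Ring A] {K : A}

theorem pow_two_mul_add_one_of_pow_three_eq (hK : K ^ 3 = 2 * K) (k : ℕ) :
    K ^ (2 * k + 1) = 2 ^ k * K := by
  induction k with
  | zero => simp
  | succ k ih =>
    calc
      K ^ (2 * (k + 1) + 1) = K ^ (2 * k + 1) * K ^ 2 := by rw [← pow_add]; ring_nf
      _ = 2 ^ k * K ^ 3 := by rw [ih, mul_assoc, ← pow_succ']
      _ = 2 ^ (k + 1) * K := by rw [hK, ← mul_assoc, ← pow_succ]

theorem one_sub_sq_sq_of_pow_three_eq (hK : K ^ 3 = 2 * K) : (1 - K ^ 2) ^ 2 = 1 := by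
  have hK4 : K ^ 4 = 2 * K ^ 2 := by
    rw [pow_succ, hK, mul_assoc, ← sq]
  calc
    (1 - K ^ 2) ^ 2 = 1 - 2 * K ^ 2 + K ^ 4 := by noncomm_ring
    _ = 1 := by rw [hK4]; abel

theorem one_add_pow_char_of_pow_three_eq (p : ℕ) [Fact p.Prime] [CharP A p] (hp : p ≠ 2)
    (h2 : (2 : A) ^ (p / 2) = -1) (hK : K ^ 3 = 2 * K) : (1 + K) ^ p = 1 - K := by
  have hp_odd : 2 * (p / 2) + 1 = p := Nat.two_mul_div_two_add_one_of_odd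
    ((Fact.out : p.Prime).odd_of_ne_two hp)
  rw [add_pow_char_of_commute _ (Commute.one_left K), one_pow, ← hp_odd,
    pow_two_mul_add_one_of_pow_three_eq hK, h2, neg_one_mul, sub_eq_add_neg]

theorem one_add_pow_char_succ_of_not_isSquare_two (p : ℕ)
    [Fact p.Prime] [Algebra (ZMod p) A] [CharP A p] (h2 : ¬IsSquare (2 : ZMod p))
    (hK : K ^ 3 = 2 * K) : (1 + K) ^ (p + 1) = 1 - K ^ 2 := by
  have hp : p ≠ 2 := by
    rintro rfl
    exact h2 ⟨0, rfl⟩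
  have h2A : (2 : A) ^ (p / 2) = -1 := by
    rw [← map_ofNat (algebraMap (ZMod p) A) 2, ← map_pow, ZMod.two_pow_div_two_eq_neg_one h2,
      map_neg, map_one]
  rw [pow_succ, one_add_pow_char_of_pow_three_eq p hp h2A hK]
  noncomm_ring

end RootTwo

/-- Conjugate, by the base change taking `M₁ * M₂` to `!![3, 4, 0; 2, 3, 0; 0, 0, 1]`, of
`!![0, 2, 0; 1, 0, 0; 0, 0, 0]`, i.e. of multiplication by `√2` on `ℤ[√2] ⊕ ℤ`. -/
def rootTwoMatrix : Matrix (Fin 3) (Fin 3) ℤ := !![2, 2, -2; -1, -2, 2; 0, 0, 0]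

section Reduction

variable {R : Type*} [Ring R]

theorem rootTwoMatrix_map_pow_three :
    (rootTwoMatrix.map (Int.cast : ℤ → R)) ^ 3 = 2 * rootTwoMatrix.map Int.cast := by
  have h : rootTwoMatrix ^ 3 = 2 * rootTwoMatrix := by decide
  simpa only [map_pow, map_mul, map_ofNat, RingHom.mapMatrix_apply, Int.coe_castRingHom] using
    congrArg (Int.castRingHom R).mapMatrix h

theorem rootTwoMatrix_map_sq_ne_zero (h2 : (2 : R) ≠ 0) :
    (rootTwoMatrix.map (Int.cast : ℤ → R)) ^ 2 ≠ 0 := by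
  have h : (rootTwoMatrix ^ 2) 0 0 = 2 := by decide
  intro hK2
  have h00 := congrFun (congrFun hK2 0) 0
  change (((Int.castRingHom R).mapMatrix rootTwoMatrix) ^ 2) 0 0 = 0 at h00
  rw [← map_pow, RingHom.mapMatrix_apply, Matrix.map_apply, h, map_ofNat] at h00
  exact h2 h00

theorem M₁_map_mul_M₂_map :
    M₁.map (Int.cast : ℤ → R) * M₂.map Int.cast = (1 + rootTwoMatrix.map Int.cast) ^ 2 := by
  have h : M₁ * M₂ = (1 + rootTwoMatrix) ^ 2 := by decide
  simpa only [map_pow, map_add, map_one, map_mul, RingHom.mapMatrix_apply,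
      Int.coe_castRingHom] using
    congrArg (Int.castRingHom R).mapMatrix h

end Reduction

theorem product_has_order_dividing_ell_plus_one_general
    (ℓ : ℕ) (hℓ : Nat.Prime ℓ) (h2 : ¬ IsSquare (2 : ZMod ℓ)) :
    ((M₁.map (Int.cast : ℤ → ZMod ℓ)) * (M₂.map (Int.cast : ℤ → ZMod ℓ))) ^ (ℓ + 1) = 1 ∧
    ((M₁.map (Int.cast : ℤ → ZMod ℓ)) * (M₂.map (Int.cast : ℤ → ZMod ℓ))) ^ ((ℓ + 1) / 2) ≠ 1 := by
  have : Fact ℓ.Prime := ⟨hℓ⟩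
  have h2_ne_zero : (2 : ZMod ℓ) ≠ 0 := fun h => h2 (h ▸ IsSquare.zero)
  have hℓ_odd : Odd ℓ := hℓ.odd_of_ne_two (by rintro rfl; exact h2_ne_zero rfl)
  set K := rootTwoMatrix.map (Int.cast : ℤ → ZMod ℓ)
  have h_half :
      (M₁.map (Int.cast : ℤ → ZMod ℓ) * M₂.map Int.cast) ^ ((ℓ + 1) / 2) = 1 - K ^ 2 := by
    rw [M₁_map_mul_M₂_map, ← pow_mul, Nat.mul_div_cancel' hℓ_odd.add_one.two_dvd,
      one_add_pow_char_succ_of_not_isSquare_two ℓ h2 rootTwoMatrix_map_pow_three]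
  constructor
  · rw [← Nat.div_two_mul_two_of_even hℓ_odd.add_one, pow_mul, h_half,
      one_sub_sq_sq_of_pow_three_eq rootTwoMatrix_map_pow_three]
  · rw [h_half, ne_eq, sub_eq_self]
    exact rootTwoMatrix_map_sq_ne_zero h2_ne_zero

/-- For an odd prime `ℓ` such that `2` is a quadratic non-residue mod `ℓ`,
the product of the reductions `M̄₁·M̄₂` has `(M̄₁M̄₂)^{ℓ+1} = 1` but
`(M̄₁M̄₂)^{(ℓ+1)/2} ≠ 1`. -/
theorem product_has_order_dividing_ell_plus_one
    (ℓ : ℕ) (hℓ : Nat.Prime ℓ) (hodd : ℓ ≠ 2) (h2 : ¬ IsSquare (2 : ZMod ℓ)) :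
    ((M₁.map (Int.cast : ℤ → ZMod ℓ)) * (M₂.map (Int.cast : ℤ → ZMod ℓ))) ^ (ℓ + 1) = 1 ∧
    ((M₁.map (Int.cast : ℤ → ZMod ℓ)) * (M₂.map (Int.cast : ℤ → ZMod ℓ))) ^ ((ℓ + 1) / 2) ≠ 1 :=
  product_has_order_dividing_ell_plus_one_general ℓ hℓ h2
end
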